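/- Let k ∈ ℕ, let x ∈ ℤ with x ≥ k + 1, let r ∈ ℝ with r > 1, let a ∈ ℂ with |a| < r, and let t ∈ ℂ. Then ∮_{|ζ|=r} (1 − ζ)^{−x} · exp(t·ζ/(1 − ζ)) · ζ^k/(ζ − a) dζ = 0. -/

import Mathlib

/-!
The integrand `f` is holomorphic on `r ≤ |ζ|`, so by Cauchy's theorem on annuli its integral
over `C(0, r)` equals that over `C(0, R)` for every `R ≥ r`; the latter is at most
`2π · sup_{|ζ| = R} |ζ f(ζ)|`. Since `x ≥ k + 1`, `ζ f(ζ) → 0` as `ζ → ∞`, so the integral vanishes.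
-/

open Complex Real

open Filter Topology Bornology Metric

theorem circleIntegral_eq_zero_of_differentiableAt_of_tendsto_cobounded {E : Type*}
    [NormedAddCommGroup E] [NormedSpace ℂ E] [CompleteSpace E] {f : ℂ → E} {c : ℂ} {r : ℝ}
    (hr : 0 < r) (hd : ∀ z, r ≤ dist z c → DifferentiableAt ℂ f z)
    (hlim : Tendsto (fun z => (z - c) • f z) (cobounded ℂ) (𝓝 0)) :
    (∮ z in C(c, r), f z) = 0 := by
  refine norm_le_zero_iff.mp (le_of_forall_pos_le_add fun ε hε => ?_)
  have hε' : 0 < ε / (2 * π) := by positivity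
  obtain ⟨R₀, -, hR₀⟩ := (hasBasis_cobounded_compl_closedBall c).eventually_iff.mp
    ((hlim.norm.eventually (ge_mem_nhds (by simpa using hε'))))
  set R := max r (R₀ + 1)
  have hrR : r ≤ R := le_max_left _ _
  have hRpos : 0 < R := hr.trans_le hrR
  have hannulus := circleIntegral_eq_of_differentiable_on_annulus_off_countable hr hrR
    Set.countable_empty (f := f) (c := c)
    (fun z hz => (hd z (by simpa using hz.2)).continuousAt.continuousWithinAt)
    (fun z hz => hd z (by simpa using (not_le.mp hz.1.2).le))
  have hbound : ∀ z ∈ sphere c R, ‖f z‖ ≤ ε / (2 * π) / R := by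
    intro z hz
    have hzR : dist z c = R := hz
    have hfar : z ∈ (closedBall c R₀)ᶜ := by
      simp only [Set.mem_compl_iff, mem_closedBall, not_le, hzR]
      exact (lt_add_one R₀).trans_le (le_max_right _ _)
    rw [le_div_iff₀ hRpos, mul_comm, ← hzR, dist_eq_norm, ← norm_smul]
    exact hR₀ hfar
  calc ‖∮ z in C(c, r), f z‖ = ‖∮ z in C(c, R), f z‖ := by rw [hannulus]
    _ ≤ 2 * π * R * (ε / (2 * π) / R) :=
      circleIntegral.norm_integral_le_of_norm_le_const hRpos.le hbound
    _ = 0 + ε := by field_simp; ring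

theorem differentiableAt_integrand (k : ℕ) (x : ℤ) (t : ℂ) {a ζ : ℂ} (h1 : ζ ≠ 1)
    (ha : ζ ≠ a) :
    DifferentiableAt ℂ
      (fun ζ => (1 - ζ) ^ (-x) * Complex.exp (t * ζ / (1 - ζ)) * ζ ^ k / (ζ - a)) ζ := by
  have h1' : 1 - ζ ≠ 0 := sub_ne_zero.mpr h1.symm
  have hsub : DifferentiableAt ℂ (fun ζ : ℂ => 1 - ζ) ζ := by fun_prop
  exact ((((hsub.zpow (Or.inl h1')).mul (((differentiableAt_const t).mul
    differentiableAt_id).div hsub h1').cexp).mul (differentiableAt_id.pow k)).div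
    (differentiableAt_id.sub_const a) (sub_ne_zero.mpr ha))

theorem mul_integrand_eq (m k : ℕ) (t a : ℂ) {ζ : ℂ} (h1 : ζ ≠ 1) :
    ζ * ((1 - ζ) ^ (-((m + k + 1 : ℕ) : ℤ)) * Complex.exp (t * ζ / (1 - ζ)) * ζ ^ k / (ζ - a)) =
      (1 - ζ)⁻¹ ^ m * ((1 - ζ)⁻¹ - 1) ^ (k + 1) * Complex.exp (t * ((1 - ζ)⁻¹ - 1)) *
        (ζ - a)⁻¹ := by
  have hu : (1 - ζ)⁻¹ - 1 = ζ / (1 - ζ) := by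
    field_simp [sub_ne_zero.mpr h1.symm]
    ring
  rw [hu, zpow_neg, zpow_natCast, mul_div_assoc t]
  generalize 1 - ζ = u -- otherwise `ring` expands the powers of `1 - ζ`
  ring

theorem tendsto_mul_integrand_cobounded {k : ℕ} {x : ℤ} (hx : (k : ℤ) + 1 ≤ x) (t a : ℂ) :
    Tendsto (fun ζ => ζ * ((1 - ζ) ^ (-x) * Complex.exp (t * ζ / (1 - ζ)) * ζ ^ k / (ζ - a)))
      (cobounded ℂ) (𝓝 0) := by
  obtain ⟨m, rfl⟩ : ∃ m : ℕ, x = ((m + k + 1 : ℕ) : ℤ) := ⟨(x - k - 1).toNat, by omega⟩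
  have hw : Tendsto (fun ζ : ℂ => (1 - ζ)⁻¹) (cobounded ℂ) (𝓝 0) :=
    tendsto_inv₀_cobounded.comp (tendsto_const_sub_cobounded 1)
  have hinv : Tendsto (fun ζ : ℂ => (ζ - a)⁻¹) (cobounded ℂ) (𝓝 0) :=
    tendsto_inv₀_cobounded.comp (tendsto_sub_const_cobounded a)
  have hg : Continuous fun w : ℂ => w ^ m * (w - 1) ^ (k + 1) * Complex.exp (t * (w - 1)) := by
    fun_prop
  have hlim := ((hg.tendsto 0).comp hw).mul hinv
  rw [mul_zero] at hlim
  refine hlim.congr' ?_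
  filter_upwards [eventually_ne_cobounded 1] with ζ hζ
  exact (mul_integrand_eq m k t a hζ).symm

/-- Vanishing contour integral (Tracy–Widom, Remark after Theorem 1):
`∮_{|ζ|=r} (1-ζ)^{-x} e^{tζ/(1-ζ)} ζᵏ/(ζ-a) dζ = 0` when `x ≥ k+1` and `|a| < r`. -/
theorem stmt_8 (k : ℕ) (x : ℤ) (hx : (k : ℤ) + 1 ≤ x) (r : ℝ) (hr : 1 < r)
    (a : ℂ) (ha : ‖a‖ < r) (t : ℂ) :
    (∮ ζ in C(0, r),
        (1 - ζ) ^ (-x) * Complex.exp (t * ζ / (1 - ζ)) * ζ ^ k / (ζ - a)) = 0 := by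
  refine circleIntegral_eq_zero_of_differentiableAt_of_tendsto_cobounded (by linarith)
    (fun ζ hζ => differentiableAt_integrand k x t ?_ ?_) ?_
  · rintro rfl
    simp only [dist_zero_right, norm_one] at hζ
    linarith
  · rintro rfl
    rw [dist_zero_right] at hζ
    linarith
  · simpa only [sub_zero, smul_eq_mul] using tendsto_mul_integrand_cobounded hx t a
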